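/- Let ρ, σ ≥ 0 and let S : G_ρ → G_σ be subadditive, i.e. S(x ∘_ρ y) ≤ S(x) ∘_σ S(y) for all x, y ∈ G_ρ. If S is bounded above on some nonempty open ball B_δ(a) ⊆ G_ρ (δ > 0), then S is locally bounded on G_ρ: every point of G_ρ has a neighbourhood on which S is bounded (above and below). -/

import Mathlib

/-!
Right translations `u ↦ u ∘_ρ c` of `G_ρ` are increasing affine homeomorphisms, and
`t ↦ t ∘_σ s = t (1 + σ s) + s` is increasing on `G_σ`. So `S (u ∘_ρ c) ≤ S u ∘_σ S c`
carries a bound above on a ball around `a` to a ball around `a ∘_ρ c`, i.e. around any point.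
For a bound below near `x`, write `x = w ∘_ρ y` with `w = x ∘_ρ y⁻¹`, which is close to `0`
when `y` is close to `x`; if `S ≤ C₀` near `0` then `S x ≤ C₀ + S y (1 + σ C₀)`, and
`1 + σ C₀ ≥ 1 + σ S 0 > 0` because `σ ≥ 0`.
-/

open Filter Topology

def popaMul (ρ x y : ℝ) : ℝ := x + y + ρ * x * y

/-- The quotient `x ∘_ρ y⁻¹` in `G_ρ`. -/
noncomputable def popaDiv (ρ x y : ℝ) : ℝ := (x - y) / (1 + ρ * y)

section

variable {ρ : ℝ}

lemma popaMul_comm (x y : ℝ) : popaMul ρ x y = popaMul ρ y x := by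
  unfold popaMul; ring

lemma popaMul_eq_mul_add (x y : ℝ) : popaMul ρ x y = x * (1 + ρ * y) + y := by
  unfold popaMul; ring

lemma popaMul_popaDiv_cancel {x y : ℝ} (hy : 1 + ρ * y ≠ 0) :
    popaMul ρ (popaDiv ρ x y) y = x := by
  rw [popaMul_eq_mul_add, popaDiv, div_mul_cancel₀ _ hy, sub_add_cancel]

lemma popaDiv_popaMul_cancel {x y : ℝ} (hy : 1 + ρ * y ≠ 0) :
    popaDiv ρ (popaMul ρ x y) y = x := by
  rw [popaMul_eq_mul_add, popaDiv, add_sub_cancel_right, mul_div_cancel_right₀ _ hy]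

lemma popaDiv_self (x : ℝ) : popaDiv ρ x x = 0 := by
  simp [popaDiv]

lemma one_add_mul_popaDiv {x y : ℝ} (hy : 1 + ρ * y ≠ 0) :
    1 + ρ * popaDiv ρ x y = (1 + ρ * x) / (1 + ρ * y) := by
  unfold popaDiv; field_simp; ring

lemma popaMul_le_popaMul_right {a b t : ℝ} (ht : 0 < 1 + ρ * t) (hab : a ≤ b) :
    popaMul ρ a t ≤ popaMul ρ b t := by
  unfold popaMul; nlinarith

lemma continuous_popaDiv_left (c : ℝ) : Continuous fun y ↦ popaDiv ρ y c := by
  unfold popaDiv; fun_prop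

lemma continuousAt_popaDiv_right (x : ℝ) {y : ℝ} (hy : 1 + ρ * y ≠ 0) :
    ContinuousAt (fun z ↦ popaDiv ρ x z) y := by
  unfold popaDiv; fun_prop (disch := exact hy)

lemma eventually_pos_one_add_mul {x : ℝ} (hx : 0 < 1 + ρ * x) : ∀ᶠ y in 𝓝 x, 0 < 1 + ρ * y :=
  continuousAt_const.eventually_lt (by fun_prop) hx

section Subadditive

variable {σ : ℝ} {S : ℝ → ℝ}
  (hmap : ∀ x : ℝ, 0 < 1 + ρ * x → 0 < 1 + σ * S x)
  (hsub : ∀ x y : ℝ, 0 < 1 + ρ * x → 0 < 1 + ρ * y → S (popaMul ρ x y) ≤ popaMul σ (S x) (S y))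
include hmap hsub

lemma isBoundedUnder_le_nhds_of_subadditive {a p : ℝ} (ha : 0 < 1 + ρ * a)
    (hbdd : IsBoundedUnder (· ≤ ·) (𝓝 a) S) (hp : 0 < 1 + ρ * p) :
    IsBoundedUnder (· ≤ ·) (𝓝 p) S := by
  obtain ⟨M, hM⟩ := hbdd.eventually_le
  set c := popaDiv ρ p a
  have hc : 0 < 1 + ρ * c := by
    rw [one_add_mul_popaDiv ha.ne']; positivity
  have hp_eq : popaMul ρ a c = p := by
    rw [popaMul_comm, popaMul_popaDiv_cancel ha.ne']
  have htendsto : Tendsto (fun y ↦ popaDiv ρ y c) (𝓝 p) (𝓝 a) := by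
    have := (continuous_popaDiv_left (ρ := ρ) c).tendsto (popaMul ρ a c)
    rwa [popaDiv_popaMul_cancel hc.ne', hp_eq] at this
  refine isBoundedUnder_of_eventually_le (a := popaMul σ M (S c)) ?_
  filter_upwards [htendsto.eventually (hM.and (eventually_pos_one_add_mul ha))]
    with y ⟨hSu, hu⟩
  calc S y = S (popaMul ρ (popaDiv ρ y c) c) := by rw [popaMul_popaDiv_cancel hc.ne']
    _ ≤ popaMul σ (S (popaDiv ρ y c)) (S c) := hsub _ _ hu hc
    _ ≤ popaMul σ M (S c) := popaMul_le_popaMul_right (hmap c hc) hSu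

lemma isBoundedUnder_ge_nhds_of_subadditive (hσ : 0 ≤ σ)
    (h₀ : IsBoundedUnder (· ≤ ·) (𝓝 0) S) {x : ℝ} (hx : 0 < 1 + ρ * x) :
    IsBoundedUnder (· ≥ ·) (𝓝 x) S := by
  obtain ⟨C, hC⟩ := h₀.eventually_le
  have hC_pos : 0 < 1 + σ * C := by
    have hS₀ := hmap 0 (by simp)
    nlinarith [mul_le_mul_of_nonneg_left hC.self_of_nhds hσ]
  have htendsto : Tendsto (fun y ↦ popaDiv ρ x y) (𝓝 x) (𝓝 0) := by
    simpa [popaDiv_self] using (continuousAt_popaDiv_right x hx.ne').tendsto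
  refine isBoundedUnder_of_eventually_ge (a := (S x - C) / (1 + σ * C)) ?_
  filter_upwards [eventually_pos_one_add_mul hx,
    htendsto.eventually (hC.and (eventually_pos_one_add_mul (by simp : 0 < 1 + ρ * 0)))]
    with y hy ⟨hSw, hw⟩
  have key : S x ≤ C + S y * (1 + σ * C) :=
    calc S x = S (popaMul ρ (popaDiv ρ x y) y) := by rw [popaMul_popaDiv_cancel hy.ne']
      _ ≤ popaMul σ (S (popaDiv ρ x y)) (S y) := hsub _ _ hw hy
      _ ≤ popaMul σ C (S y) := popaMul_le_popaMul_right (hmap y hy) hSw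
      _ = C + S y * (1 + σ * C) := by unfold popaMul; ring
  rw [div_le_iff₀ hC_pos]
  linarith

end Subadditive

end

theorem popa_subadditive_locally_bounded_general (ρ σ : ℝ) (hσ : 0 ≤ σ)
    (S : ℝ → ℝ)
    (hmap : ∀ x : ℝ, 0 < 1 + ρ * x → 0 < 1 + σ * S x)
    (hsub : ∀ x y : ℝ, 0 < 1 + ρ * x → 0 < 1 + ρ * y →
      S (x + y + ρ * x * y) ≤ S x + S y + σ * S x * S y)
    (hbdd : ∃ a δ M : ℝ, 0 < δ ∧
      (∀ x ∈ Set.Ioo (a - δ) (a + δ), 0 < 1 + ρ * x) ∧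
      ∀ x ∈ Set.Ioo (a - δ) (a + δ), S x ≤ M) :
    ∀ x : ℝ, 0 < 1 + ρ * x → ∃ ε > (0 : ℝ),
      (∀ y ∈ Set.Ioo (x - ε) (x + ε), 0 < 1 + ρ * y) ∧
      ∃ m M : ℝ, ∀ y ∈ Set.Ioo (x - ε) (x + ε), m ≤ S y ∧ S y ≤ M := by
  obtain ⟨a, δ, M, hδ, hpos, hM⟩ := hbdd
  have ha_mem : a ∈ Set.Ioo (a - δ) (a + δ) := ⟨by linarith, by linarith⟩
  have hbdd_a : IsBoundedUnder (· ≤ ·) (𝓝 a) S :=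
    isBoundedUnder_of_eventually_le (eventually_of_mem (Ioo_mem_nhds ha_mem.1 ha_mem.2) hM)
  have hup : ∀ p, 0 < 1 + ρ * p → IsBoundedUnder (· ≤ ·) (𝓝 p) S :=
    fun _ ↦ isBoundedUnder_le_nhds_of_subadditive hmap hsub (hpos a ha_mem) hbdd_a
  intro x hx
  obtain ⟨M', hM'⟩ := (hup x hx).eventually_le
  obtain ⟨m, hm⟩ :=
    (isBoundedUnder_ge_nhds_of_subadditive hmap hsub hσ (hup 0 (by simp)) hx).eventually_ge
  obtain ⟨ε, hε, hball⟩ :=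
    Metric.eventually_nhds_iff_ball.1 ((eventually_pos_one_add_mul hx).and (hm.and hM'))
  rw [Real.ball_eq_Ioo] at hball
  exact ⟨ε, hε, fun y hy ↦ (hball y hy).1, m, M', fun y hy ↦ (hball y hy).2⟩

/-- **Prop. 5(i).** For `ρ, σ ≥ 0`, a subadditive map
`S : (G_ρ, ∘_ρ) → (G_σ, ∘_σ)` (i.e. `S(x ∘_ρ y) ≤ S(x) ∘_σ S(y)`, both sides in
`G_σ`) which is bounded above on some open ball `B_δ(a) ⊆ G_ρ` is locally
bounded on `G_ρ`: each point of `G_ρ` has a neighbourhood on which `S` is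
bounded above and below. -/
theorem popa_subadditive_locally_bounded (ρ σ : ℝ) (hρ : 0 ≤ ρ) (hσ : 0 ≤ σ)
    (S : ℝ → ℝ)
    (hmap : ∀ x : ℝ, 0 < 1 + ρ * x → 0 < 1 + σ * S x)
    (hsub : ∀ x y : ℝ, 0 < 1 + ρ * x → 0 < 1 + ρ * y →
      S (x + y + ρ * x * y) ≤ S x + S y + σ * S x * S y)
    (hbdd : ∃ a δ M : ℝ, 0 < δ ∧
      (∀ x ∈ Set.Ioo (a - δ) (a + δ), 0 < 1 + ρ * x) ∧
      ∀ x ∈ Set.Ioo (a - δ) (a + δ), S x ≤ M) :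
    ∀ x : ℝ, 0 < 1 + ρ * x → ∃ ε > (0 : ℝ),
      (∀ y ∈ Set.Ioo (x - ε) (x + ε), 0 < 1 + ρ * y) ∧
      ∃ m M : ℝ, ∀ y ∈ Set.Ioo (x - ε) (x + ε), m ≤ S y ∧ S y ≤ M :=
  popa_subadditive_locally_bounded_general ρ σ hσ S hmap hsub hbdd
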